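/- Let N be a 3-prime zero-symmetric left near-ring admitting a nonzero multiplicative derivation d with d(N) contained in the multiplicative center Z of N. Then multiplication in N is commutative and (N,+) is abelian (i.e., N is a commutative ring). -/

import Mathlib

/-! Let `c` be an element with `d c ≠ 0`. Since `d c` is central and `N` is 3-prime, `d c` is left
cancellable. Expanding `d (x * c) * c = c * d (x * c)` with the partial distributive law
`(x * d y + d x * y) * z = x * (d y * z) + d x * (y * z)` and cancelling `d c` shows that `c` is
central; expanding `d (c * x) * t = t * d (c * x)` the same way then shows that `t * x = x * t`.
Once multiplication is commutative, both distributive laws hold, and expanding `(a + b) * (w + w)`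
in the two possible orders gives `w * (a + b) = w * (b + a)`; cancelling `w = d c` gives `a + b = b + a`. -/

class LeftNearRing (N : Type*) extends AddGroup N, Mul N where
  mul_assoc : ∀ a b c : N, a * b * c = a * (b * c)
  left_distrib : ∀ a b c : N, a * (b + c) = a * b + a * c

namespace LeftNearRing

variable {N : Type*} [LeftNearRing N]

def IsThreePrime (N : Type*) [LeftNearRing N] : Prop :=
  ∀ a b : N, (∀ n : N, a * n * b = 0) → a = 0 ∨ b = 0

def IsMulDerivation (d : N → N) : Prop :=
  ∀ x y : N, d (x * y) = x * d y + d x * y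

def mulLeft (a : N) : N →+ N :=
  AddMonoidHom.mk' (a * ·) (left_distrib a)

theorem mul_zero' (a : N) : a * 0 = 0 :=
  (mulLeft a).map_zero

theorem mul_sub' (a b c : N) : a * (b - c) = a * b - a * c :=
  (mulLeft a).map_sub b c

theorem mul_left_cancel_of_forall_commute (hp : IsThreePrime N) {z : N}
    (hz : ∀ x, z * x = x * z) (hz0 : z ≠ 0) {u v : N} (h : z * u = z * v) : u = v := by
  have hzuv : z * (u - v) = 0 := by rw [mul_sub', h, sub_self]
  have hprime := hp z (u - v) fun n => by rw [hz n, LeftNearRing.mul_assoc, hzuv, mul_zero']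
  exact sub_eq_zero.mp (hprime.resolve_left hz0)

theorem IsMulDerivation.partial_distrib {d : N → N} (hd : IsMulDerivation d) (x y z : N) :
    (x * d y + d x * y) * z = x * (d y * z) + d x * (y * z) := by
  have h₁ := hd (x * y) z
  have h₂ := hd x (y * z)
  rw [hd x y, LeftNearRing.mul_assoc x y z] at h₁
  rw [hd y z, left_distrib] at h₂
  have h := h₁.symm.trans h₂
  rw [LeftNearRing.mul_assoc x y (d z), add_assoc] at h
  exact add_left_cancel h

theorem commute_of_deriv_ne_zero (hp : IsThreePrime N) {d : N → N} (hd : IsMulDerivation d)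
    (hc : ∀ x y : N, d x * y = y * d x) {c : N} (hc0 : d c ≠ 0) (x : N) :
    c * x = x * c := by
  have h := hc (x * c) c
  rw [hd x c, hd.partial_distrib, left_distrib c (x * d c)] at h
  have hcdc : c * (d x * c) = d x * (c * c) := by
    rw [← LeftNearRing.mul_assoc, ← hc x c, LeftNearRing.mul_assoc]
  rw [hcdc] at h
  apply mul_left_cancel_of_forall_commute hp (hc c) hc0
  calc d c * (c * x) = c * (x * d c) := by
        rw [← hc c x, ← LeftNearRing.mul_assoc c, ← hc c c, LeftNearRing.mul_assoc]
    _ = x * (d c * c) := (add_right_cancel h).symm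
    _ = d c * (x * c) := by rw [hc c c, ← LeftNearRing.mul_assoc, hc c (x * c)]

theorem mul_comm_of_deriv_ne_zero (hp : IsThreePrime N) {d : N → N} (hd : IsMulDerivation d)
    (hc : ∀ x y : N, d x * y = y * d x) {c : N} (hc0 : d c ≠ 0) (t x : N) : t * x = x * t := by
  have h := hc (c * x) t
  rw [hd c x, hd.partial_distrib, left_distrib t (c * d x)] at h
  have hcdx : c * (d x * t) = t * (c * d x) := by
    rw [hc x t, ← LeftNearRing.mul_assoc, commute_of_deriv_ne_zero hp hd hc hc0 t,
      LeftNearRing.mul_assoc]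
  rw [hcdx] at h
  apply mul_left_cancel_of_forall_commute hp (hc c) hc0
  calc d c * (t * x) = t * d c * x := by rw [← hc c t, LeftNearRing.mul_assoc]
    _ = t * (d c * x) := LeftNearRing.mul_assoc _ _ _
    _ = d c * (x * t) := (add_left_cancel h).symm

theorem add_mul_of_mul_comm (hmc : ∀ x y : N, x * y = y * x) (a b z : N) :
    (a + b) * z = a * z + b * z := by
  rw [hmc, left_distrib, hmc z, hmc z]

theorem mul_add_comm_of_mul_comm (hmc : ∀ x y : N, x * y = y * x) (w a b : N) :
    w * a + w * b = w * b + w * a := by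
  have h : w * a + (w * b + w * a) + w * b = w * a + (w * a + w * b) + w * b :=
    calc _ = (w * a + w * b) + (w * a + w * b) := by simp only [add_assoc]
      _ = (w + w) * (a + b) := by rw [add_mul_of_mul_comm hmc, left_distrib]
      _ = (w * a + w * a) + (w * b + w * b) := by
        rw [left_distrib, add_mul_of_mul_comm hmc, add_mul_of_mul_comm hmc]
      _ = _ := by simp only [add_assoc]
  exact (add_left_cancel (add_right_cancel h)).symm

theorem add_comm_of_mul_comm (hp : IsThreePrime N) (hmc : ∀ x y : N, x * y = y * x) {w : N}
    (hw : w ≠ 0) (a b : N) : a + b = b + a := by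
  apply mul_left_cancel_of_forall_commute hp (hmc w) hw
  rw [left_distrib, left_distrib, mul_add_comm_of_mul_comm hmc]

end LeftNearRing

theorem stmt5_general {N : Type*} [LeftNearRing N]
    (hp : ∀ a b : N, (∀ n : N, a * n * b = 0) → a = 0 ∨ b = 0)
    (d : N → N) (hd : ∀ x y : N, d (x * y) = x * d y + d x * y)
    (hd0 : ∃ x : N, d x ≠ 0)
    (hc : ∀ x y : N, d x * y = y * d x) :
    (∀ x y : N, x * y = y * x) ∧ (∀ x y : N, x + y = y + x) := by
  obtain ⟨c, hc0⟩ := hd0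
  have hmc := LeftNearRing.mul_comm_of_deriv_ne_zero hp hd hc hc0
  exact ⟨hmc, LeftNearRing.add_comm_of_mul_comm hp hmc hc0⟩

theorem stmt5 {N : Type*} [LeftNearRing N]
    (hzs : ∀ x : N, 0 * x = 0)
    (hp : ∀ a b : N, (∀ n : N, a * n * b = 0) → a = 0 ∨ b = 0)
    (d : N → N) (hd : ∀ x y : N, d (x * y) = x * d y + d x * y)
    (hd0 : ∃ x : N, d x ≠ 0)
    (hc : ∀ x y : N, d x * y = y * d x) :
    (∀ x y : N, x * y = y * x) ∧ (∀ x y : N, x + y = y + x) :=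
  stmt5_general hp d hd hd0 hc
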